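/- arXiv:1604.07047 — 3 statements merged into one kernel-verified Lean document; each statement's English description precedes it below -/
import Mathlib

section
/- Let a ∈ 𝔹_N with a ≠ 0, set α = -a/√(aa*) ∈ ∂𝔹_N. Then b_a(z) - b_a(α) = [ (z-α)( a*a·(1-√(1-aa*))/(aa*) - I_N ) + z(αa*) - α(za*) ] · √(1-aa*) / ( (1-za*)(1+√(aa*)) ) for all z ∈ 𝔹_N. -/
open Matrix
open scoped ComplexConjugate

/-- `zw* = Σ_u z_u conj(w_u)`. -/
noncomputable def rowInner {N : ℕ} (z w : Fin N → ℂ) : ℂ := ∑ u, z u * conj (w u)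

/-- Rudin's formula for the `ℂ^{1×N}`-valued Blaschke factor:
`b_a(z) = (a - (za*/aa*)a - √(1-aa*)(z - (za*/aa*)a))/(1-za*)`. -/
noncomputable def blaschkeR {N : ℕ} (a z : Fin N → ℂ) : Fin N → ℂ :=
  (1 - rowInner z a)⁻¹ •
    (a - (rowInner z a / ((∑ u, ‖a u‖ ^ 2 : ℝ) : ℂ)) • a
       - (Real.sqrt (1 - (∑ u, ‖a u‖ ^ 2)) : ℂ) •
           (z - (rowInner z a / ((∑ u, ‖a u‖ ^ 2 : ℝ) : ℂ)) • a))

/-! Since `⟨α, a⟩ = -√(aa*)`, the `√(1 - aa*)` term of `b_a(α)` vanishes and `b_a(α) = -α`.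
Coordinatewise, after clearing the denominators `(1 - za*)(1 + √(aa*))aa*`, the two sides of the
formula differ by `a_u (√(aa*) + za*) (t² - (1 - aa*))` with `t = √(1 - aa*)`, which is zero. -/

section RowInner

variable {N : ℕ}

theorem rowInner_self (a : Fin N → ℂ) : rowInner a a = ((∑ u, ‖a u‖ ^ 2 : ℝ) : ℂ) := by
  push_cast
  exact Finset.sum_congr rfl fun u _ => Complex.mul_conj' (a u)

theorem rowInner_sub_left (x y a : Fin N → ℂ) :
    rowInner (fun u => x u - y u) a = rowInner x a - rowInner y a := by
  simp only [rowInner, sub_mul, Finset.sum_sub_distrib]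

theorem rowInner_neg_div_left (x y : Fin N → ℂ) (c : ℂ) :
    rowInner (fun u => -(x u) / c) y = -rowInner x y / c := by
  simp only [rowInner, neg_div, neg_mul, Finset.sum_neg_distrib, Finset.sum_div, div_mul_eq_mul_div]

theorem sq_norm_rowInner_le (z a : Fin N → ℂ) :
    ‖rowInner z a‖ ^ 2 ≤ (∑ u, ‖z u‖ ^ 2) * ∑ u, ‖a u‖ ^ 2 := by
  have h : ‖rowInner z a‖ ≤ ∑ u, ‖z u‖ * ‖a u‖ :=
    (norm_sum_le _ _).trans_eq (by simp only [norm_mul, RCLike.norm_conj])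
  exact (pow_le_pow_left₀ (norm_nonneg _) h 2).trans (Finset.sum_mul_sq_le_sq_mul_sq _ _ _)

theorem norm_rowInner_lt_one {z a : Fin N → ℂ} (hz : ∑ u, ‖z u‖ ^ 2 < 1)
    (ha : ∑ u, ‖a u‖ ^ 2 ≤ 1) : ‖rowInner z a‖ < 1 := by
  have hz0 : 0 ≤ ∑ u, ‖z u‖ ^ 2 := by positivity
  have hprod : (∑ u, ‖z u‖ ^ 2) * ∑ u, ‖a u‖ ^ 2 < 1 :=
    lt_of_le_of_lt (mul_le_of_le_one_right hz0 ha) hz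
  exact (sq_lt_one_iff₀ (norm_nonneg _)).mp ((sq_norm_rowInner_le z a).trans_lt hprod)

theorem rowInner_eq_dotProduct (x a : Fin N → ℂ) : rowInner x a = x ⬝ᵥ star a := rfl

theorem vecMul_smul_vecMulVec_star_sub_one (x a : Fin N → ℂ) (c : ℂ) :
    x ᵥ* (c • vecMulVec (star a) a - 1) = (c * rowInner x a) • a - x := by
  rw [vecMul_sub, vecMul_one, vecMul_smul, vecMul_vecMulVec, ← rowInner_eq_dotProduct, smul_smul]

theorem sum_norm_sq_pos {a : Fin N → ℂ} (ha : a ≠ 0) : 0 < ∑ u, ‖a u‖ ^ 2 := by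
  obtain ⟨u, hu⟩ := Function.ne_iff.mp ha
  exact Finset.sum_pos' (fun v _ => by positivity) ⟨u, Finset.mem_univ u, by positivity⟩

end RowInner

theorem blaschkeR_neg_div_sqrt {N : ℕ} {a : Fin N → ℂ} (ha : a ≠ 0) :
    blaschkeR a (fun u => -(a u) / (Real.sqrt (∑ v, ‖a v‖ ^ 2) : ℂ))
      = fun u => a u / (Real.sqrt (∑ v, ‖a v‖ ^ 2) : ℂ) := by
  funext u
  simp only [blaschkeR, rowInner_neg_div_left, rowInner_self, Pi.smul_apply, Pi.sub_apply,
    smul_eq_mul]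
  set A := ∑ v, ‖a v‖ ^ 2
  have hs : (Real.sqrt A : ℂ) ≠ 0 := by
    exact_mod_cast (Real.sqrt_pos.mpr (sum_norm_sq_pos ha)).ne'
  have h1s : 1 + (Real.sqrt A : ℂ) ≠ 0 := by norm_cast; positivity
  have hsA : (Real.sqrt A : ℂ) ^ 2 = A := by
    norm_cast; exact Real.sq_sqrt (sum_norm_sq_pos ha).le
  rw [← hsA]
  field_simp
  linear_combination a u * mul_inv_cancel₀ h1s

theorem blaschke_difference_identity {A S T w x y : ℂ} (hS : S ≠ 0) (h1S : 1 + S ≠ 0)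
    (h1w : 1 - w ≠ 0) (hSA : S ^ 2 = A) (hTA : T ^ 2 = 1 - A) :
    (1 - w)⁻¹ * (x - w / A * x - T * (y - w / A * x)) - x / S
      = T / ((1 - w) * (1 + S)) *
          ((1 - T) / A * (w - -A / S) * x - (y - -x / S) + -A / S * y - w * (-x / S)) := by
  subst hSA
  field_simp
  linear_combination x * (S + w) * hTA

/-- The explicit formula for `b_a(z) - b_a(α)` with `α = -a/√(aa*)`. -/
theorem blaschke_difference_formula {N : ℕ} (a : Fin N → ℂ) (ha : a ≠ 0)
    (haball : (∑ u, ‖a u‖ ^ 2) < 1) (z : Fin N → ℂ) (hz : (∑ u, ‖z u‖ ^ 2) < 1) :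
    blaschkeR a z - blaschkeR a (fun u => -(a u) / (Real.sqrt (∑ v, ‖a v‖ ^ 2) : ℂ))
      = ((Real.sqrt (1 - (∑ u, ‖a u‖ ^ 2)) : ℂ) /
          ((1 - rowInner z a) * (1 + (Real.sqrt (∑ u, ‖a u‖ ^ 2) : ℂ)))) •
        (Matrix.vecMul
            (fun u => z u - (-(a u) / (Real.sqrt (∑ v, ‖a v‖ ^ 2) : ℂ)))
            ((((1 - Real.sqrt (1 - (∑ u, ‖a u‖ ^ 2))) / (∑ u, ‖a u‖ ^ 2) : ℝ) : ℂ) •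
              Matrix.vecMulVec (star a) a - 1)
          + rowInner (fun u => -(a u) / (Real.sqrt (∑ v, ‖a v‖ ^ 2) : ℂ)) a • z
          - rowInner z a • (fun u => -(a u) / (Real.sqrt (∑ v, ‖a v‖ ^ 2) : ℂ))) := by
  rw [blaschkeR_neg_div_sqrt ha, vecMul_smul_vecMulVec_star_sub_one]
  funext u
  simp only [blaschkeR, rowInner_sub_left, rowInner_neg_div_left, rowInner_self, Pi.smul_apply,
    Pi.sub_apply, Pi.add_apply, smul_eq_mul, Complex.ofReal_div, Complex.ofReal_sub,
    Complex.ofReal_one]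
  set A := ∑ v, ‖a v‖ ^ 2
  have hA : 0 < A := sum_norm_sq_pos ha
  have hs : (Real.sqrt A : ℂ) ≠ 0 := by exact_mod_cast (Real.sqrt_pos.mpr hA).ne'
  have h1s : 1 + (Real.sqrt A : ℂ) ≠ 0 := by norm_cast; positivity
  have h1w : 1 - rowInner z a ≠ 0 :=
    sub_ne_zero.mpr fun h => (norm_rowInner_lt_one hz haball.le).ne (by rw [← h, norm_one])
  have hsA : (Real.sqrt A : ℂ) ^ 2 = A := by norm_cast; exact Real.sq_sqrt hA.le
  have htA : (Real.sqrt (1 - A) : ℂ) ^ 2 = 1 - A := by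
    norm_cast; exact Real.sq_sqrt (by linarith)
  exact blaschke_difference_identity hs h1s h1w hsA htA
end

section
/- Let a ∈ 𝔹_N, a ≠ 0, α = -a/‖a‖. Then for every z ∈ 𝔹_N, ‖b_a(z) - b_a(α)‖ ≤ 4√(1-‖a‖²)/(1-‖z‖). -/
open Matrix
open scoped ComplexConjugate

/-! With `s = ‖a‖`, `q = √(1 - s²)`, `λ = ⟪a, z⟫` and `p = (λ / s²) a`, the point `α = -a / s`
lies on `ℂ a`, so the `q`-term of `b_a(α)` vanishes and `b_a(α) = a / s`. Subtracting,
`b_a(z) - b_a(α) = (1 - λ)⁻¹ ((1 - 1/s)(1 + λ/s) a - q (z - p))`.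
Since `|λ| ≤ s ‖z‖`, the first term has norm at most `2 (1 - s)` and `‖z - p‖ ≤ 2 ‖z‖ ≤ 2`;
with `1 - s ≤ q` the bracket is at most `4 q`, and `|1 - λ| ≥ 1 - ‖z‖`. -/

open scoped InnerProductSpace

section InnerProductSpace

variable {E : Type*} [NormedAddCommGroup E] [InnerProductSpace ℂ E]

/-- Coordinate-free form of `blaschkeR`, on any complex inner product space. -/
noncomputable def blaschke (a z : E) : E :=
  (1 - ⟪a, z⟫_ℂ)⁻¹ •
    (a - (⟪a, z⟫_ℂ / ((‖a‖ ^ 2 : ℝ) : ℂ)) • a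
      - (√(1 - ‖a‖ ^ 2) : ℂ) • (z - (⟪a, z⟫_ℂ / ((‖a‖ ^ 2 : ℝ) : ℂ)) • a))

theorem blaschke_neg_inv_norm_smul {a : E} (ha : a ≠ 0) :
    blaschke a (-(‖a‖ : ℂ)⁻¹ • a) = (‖a‖ : ℂ)⁻¹ • a := by
  have hs : (‖a‖ : ℂ) ≠ 0 := by exact_mod_cast norm_ne_zero_iff.mpr ha
  have h1s : 1 + (‖a‖ : ℂ) ≠ 0 := by exact_mod_cast (by positivity : (1 + ‖a‖ : ℝ) ≠ 0)
  have hinner : ⟪a, -(‖a‖ : ℂ)⁻¹ • a⟫_ℂ = -(‖a‖ : ℂ) := by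
    rw [inner_smul_right, inner_self_eq_norm_sq_to_K]
    simp only [RCLike.ofReal_eq_complex_ofReal]
    field_simp
  rw [blaschke, hinner]
  match_scalars
  rw [sub_neg_eq_add]
  field_simp
  ring

theorem blaschke_sub_inv_norm_smul {a : E} (ha : a ≠ 0) {z : E} (hz : 1 - ⟪a, z⟫_ℂ ≠ 0) :
    blaschke a z - (‖a‖ : ℂ)⁻¹ • a =
      (1 - ⟪a, z⟫_ℂ)⁻¹ • (((1 - (‖a‖ : ℂ)⁻¹) * (1 + ⟪a, z⟫_ℂ / ‖a‖)) • a
        - (√(1 - ‖a‖ ^ 2) : ℂ) • (z - (⟪a, z⟫_ℂ / ((‖a‖ ^ 2 : ℝ) : ℂ)) • a)) := by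
  have hs : (‖a‖ : ℂ) ≠ 0 := by exact_mod_cast norm_ne_zero_iff.mpr ha
  rw [blaschke]
  match_scalars
  · field_simp
    ring
  · rfl

theorem one_sub_le_sqrt_one_sub_sq {s : ℝ} (hs0 : 0 ≤ s) (hs1 : s ≤ 1) : 1 - s ≤ √(1 - s ^ 2) :=
  Real.le_sqrt_of_sq_le (by nlinarith)

theorem one_sub_norm_le_norm_one_sub_inner {a : E} (ha : ‖a‖ ≤ 1) (z : E) :
    1 - ‖z‖ ≤ ‖1 - ⟪a, z⟫_ℂ‖ := by
  have hinner := norm_inner_le_norm (𝕜 := ℂ) a z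
  have htri := norm_sub_norm_le (1 : ℂ) ⟪a, z⟫_ℂ
  rw [norm_one] at htri
  nlinarith [norm_nonneg z]

theorem norm_sub_inner_div_smul_le (a z : E) :
    ‖z - (⟪a, z⟫_ℂ / ((‖a‖ ^ 2 : ℝ) : ℂ)) • a‖ ≤ 2 * ‖z‖ := by
  rcases eq_or_ne a 0 with rfl | ha
  · simp only [inner_zero_left, zero_div, zero_smul, sub_zero]; linarith [norm_nonneg z]
  have hs : 0 < ‖a‖ := norm_pos_iff.mpr ha
  have hproj : ‖(⟪a, z⟫_ℂ / ((‖a‖ ^ 2 : ℝ) : ℂ)) • a‖ ≤ ‖z‖ := by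
    rw [norm_smul, norm_div, Complex.norm_real, Real.norm_of_nonneg (by positivity)]
    calc ‖⟪a, z⟫_ℂ‖ / ‖a‖ ^ 2 * ‖a‖ ≤ ‖a‖ * ‖z‖ / ‖a‖ ^ 2 * ‖a‖ := by
          gcongr; exact norm_inner_le_norm a z
      _ = ‖z‖ := by field_simp
  linarith [norm_sub_le z ((⟪a, z⟫_ℂ / ((‖a‖ ^ 2 : ℝ) : ℂ)) • a)]

theorem norm_one_sub_inv_norm_mul_smul_le {a z : E} (ha : a ≠ 0) (ha1 : ‖a‖ ≤ 1) (hz : ‖z‖ ≤ 1) :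
    ‖((1 - (‖a‖ : ℂ)⁻¹) * (1 + ⟪a, z⟫_ℂ / ‖a‖)) • a‖ ≤ 2 * (1 - ‖a‖) := by
  have hs : 0 < ‖a‖ := norm_pos_iff.mpr ha
  have h1 : ‖1 - (‖a‖ : ℂ)⁻¹‖ = (1 - ‖a‖) / ‖a‖ := by
    rw [← Complex.ofReal_inv, ← Complex.ofReal_one, ← Complex.ofReal_sub, Complex.norm_real,
      Real.norm_of_nonpos (by rw [sub_nonpos]; exact one_le_inv₀ hs |>.mpr ha1)]
    field_simp
    ring
  have h2 : ‖1 + ⟪a, z⟫_ℂ / ‖a‖‖ ≤ 2 := by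
    calc ‖1 + ⟪a, z⟫_ℂ / ‖a‖‖ ≤ 1 + ‖a‖ * ‖z‖ / ‖a‖ := by
          grw [norm_add_le, norm_one, norm_div, Complex.norm_real, Real.norm_of_nonneg hs.le,
            norm_inner_le_norm]
      _ ≤ 2 := by rw [mul_div_cancel_left₀ _ hs.ne']; linarith
  rw [norm_smul, norm_mul, h1]
  calc (1 - ‖a‖) / ‖a‖ * ‖1 + ⟪a, z⟫_ℂ / ‖a‖‖ * ‖a‖ = (1 - ‖a‖) * ‖1 + ⟪a, z⟫_ℂ / ‖a‖‖ := by
        field_simp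
    _ ≤ (1 - ‖a‖) * 2 := by gcongr
    _ = 2 * (1 - ‖a‖) := mul_comm _ _

theorem norm_blaschke_sub_blaschke_neg_inv_norm_smul_le {a : E} (ha : a ≠ 0) (ha1 : ‖a‖ < 1)
    {z : E} (hz : ‖z‖ < 1) :
    ‖blaschke a z - blaschke a (-(‖a‖ : ℂ)⁻¹ • a)‖ ≤ 4 * √(1 - ‖a‖ ^ 2) / (1 - ‖z‖) := by
  have hden := one_sub_norm_le_norm_one_sub_inner ha1.le z
  have hne : 1 - ⟪a, z⟫_ℂ ≠ 0 := norm_pos_iff.mp (by linarith)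
  have hnum : ‖((1 - (‖a‖ : ℂ)⁻¹) * (1 + ⟪a, z⟫_ℂ / ‖a‖)) • a
      - (√(1 - ‖a‖ ^ 2) : ℂ) • (z - (⟪a, z⟫_ℂ / ((‖a‖ ^ 2 : ℝ) : ℂ)) • a)‖
      ≤ 4 * √(1 - ‖a‖ ^ 2) := by
    grw [norm_sub_le, norm_one_sub_inv_norm_mul_smul_le ha ha1.le hz.le, norm_smul,
      Complex.norm_real, Real.norm_of_nonneg (Real.sqrt_nonneg _), norm_sub_inner_div_smul_le,
      one_sub_le_sqrt_one_sub_sq (norm_nonneg a) ha1.le]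
    nlinarith [Real.sqrt_nonneg (1 - ‖a‖ ^ 2)]
  rw [blaschke_neg_inv_norm_smul ha, blaschke_sub_inv_norm_smul ha hne, norm_smul, norm_inv,
    inv_mul_eq_div]
  exact div_le_div₀ (by positivity) hnum (by linarith) hden

end InnerProductSpace

theorem rowInner_eq_inner {N : ℕ} (z w : Fin N → ℂ) :
    rowInner z w = ⟪WithLp.toLp 2 w, WithLp.toLp 2 z⟫_ℂ := by
  simp [rowInner, PiLp.inner_apply]

theorem sum_norm_sq_eq_norm_toLp_sq {N : ℕ} (x : Fin N → ℂ) :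
    ∑ u, ‖x u‖ ^ 2 = ‖WithLp.toLp 2 x‖ ^ 2 :=
  (EuclideanSpace.norm_sq_eq (WithLp.toLp 2 x)).symm

theorem sqrt_sum_norm_sq_eq_norm_toLp {N : ℕ} (x : Fin N → ℂ) :
    √(∑ u, ‖x u‖ ^ 2) = ‖WithLp.toLp 2 x‖ :=
  (EuclideanSpace.norm_eq (WithLp.toLp 2 x)).symm

theorem toLp_blaschkeR {N : ℕ} (a z : Fin N → ℂ) :
    WithLp.toLp 2 (blaschkeR a z) = blaschke (WithLp.toLp 2 a) (WithLp.toLp 2 z) := by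
  simp only [blaschkeR, blaschke, rowInner_eq_inner, sum_norm_sq_eq_norm_toLp_sq, WithLp.toLp_smul,
    WithLp.toLp_sub]

/-- The bound `‖b_a(z) - b_a(α)‖ ≤ 4√(1-‖a‖²)/(1-‖z‖)` with `α = -a/‖a‖`. -/
theorem blaschke_difference_bound {N : ℕ} (a : Fin N → ℂ) (ha : a ≠ 0)
    (haball : (∑ u, ‖a u‖ ^ 2) < 1) (z : Fin N → ℂ) (hz : (∑ u, ‖z u‖ ^ 2) < 1) :
    Real.sqrt (∑ u, ‖(blaschkeR a z
        - blaschkeR a (fun v => -(a v) / (Real.sqrt (∑ v', ‖a v'‖ ^ 2) : ℂ))) u‖ ^ 2)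
      ≤ 4 * Real.sqrt (1 - (∑ u, ‖a u‖ ^ 2))
          / (1 - Real.sqrt (∑ u, ‖z u‖ ^ 2)) := by
  have hα : WithLp.toLp 2 (fun v => -(a v) / (√(∑ v', ‖a v'‖ ^ 2) : ℂ))
      = -(‖WithLp.toLp 2 a‖ : ℂ)⁻¹ • WithLp.toLp 2 a := by
    rw [sqrt_sum_norm_sq_eq_norm_toLp]
    ext v
    simp [div_eq_inv_mul]
  rw [sqrt_sum_norm_sq_eq_norm_toLp, WithLp.toLp_sub, toLp_blaschkeR, toLp_blaschkeR, hα,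
    sum_norm_sq_eq_norm_toLp_sq, sqrt_sum_norm_sq_eq_norm_toLp]
  rw [sum_norm_sq_eq_norm_toLp_sq, sq_lt_one_iff_abs_lt_one, abs_norm] at haball hz
  have ha' : WithLp.toLp 2 a ≠ 0 := fun h => ha (congrArg WithLp.ofLp h)
  exact norm_blaschke_sub_blaschke_neg_inv_norm_smul_le ha' haball hz
end

section
/- (Cauchy property of partial Blaschke products) With F_k = [I|0] partial isometries (‖F_k‖ = 1, ‖ZF_k‖ = ‖Z‖), A_k matrices with K := Σ_{k=1}^∞ ‖A_k‖ < ∞, and Z_m = (F_1+A_1)⋯(F_m+A_m), for m₂ > m₁: ‖Z_{m₂} - Z_{m₁}F_{m₁+1}⋯F_{m₂}‖ ≤ e^{2K} Σ_{k=m₁+1}^{m₂} ‖A_k‖. In particular, after the natural isometric embeddings i_m into ℓ², the sequence (i_m(Z_m)) is Cauchy in ℓ². -/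
open Matrix
open scoped Matrix.Norms.L2Operator

/-- The ordered product `G₁ G₂ ⋯ G_m` of matrices of compatible (growing) sizes. -/
noncomputable def matProd (p : ℕ → ℕ)
    (G : ∀ k : ℕ, Matrix (Fin (p k)) (Fin (p (k + 1))) ℂ) :
    ∀ m : ℕ, Matrix (Fin (p 0)) (Fin (p m)) ℂ
  | 0 => 1
  | (m + 1) => matProd p G m * G m

/-- The ordered product `G_{m₁+1} ⋯ G_{m₁+d}`. -/
noncomputable def matProdFrom (p : ℕ → ℕ)
    (G : ∀ k : ℕ, Matrix (Fin (p k)) (Fin (p (k + 1))) ℂ) (m₁ : ℕ) :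
    ∀ d : ℕ, Matrix (Fin (p m₁)) (Fin (p (m₁ + d))) ℂ
  | 0 => (1 : Matrix (Fin (p m₁)) (Fin (p m₁)) ℂ)
  | (d + 1) => matProdFrom p G m₁ d * G (m₁ + d)

/-- The canonical partial isometry `F_k = (I | 0)`. -/
def embMat (p : ℕ → ℕ) (k : ℕ) : Matrix (Fin (p k)) (Fin (p (k + 1))) ℂ :=
  Matrix.of fun i j => if (i : ℕ) = (j : ℕ) then 1 else 0

/-- The row vector `Z_m ∈ ℂ^{1×p_m}` padded by zeros into a sequence. -/
noncomputable def padRow (p : ℕ → ℕ)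
    (G : ∀ k : ℕ, Matrix (Fin (p k)) (Fin (p (k + 1))) ℂ) (m j : ℕ) : ℂ :=
  if h : j < p m then ∑ i : Fin (p 0), matProd p G m i ⟨j, h⟩ else 0

/-!
Write `Z_{m₂} = Z_{m₁} P` with `P = (F_{m₁+1} + A_{m₁+1}) ⋯ (F_{m₂} + A_{m₂})` and `Q = F_{m₁+1} ⋯ F_{m₂}`.
Since every `F_k` is a contraction, telescoping `P - Q` one factor at a time gives
`‖P - Q‖ ≤ ∏ (1 + ‖A_k‖) - 1 ≤ e^S - 1 ≤ S e^S` with `S = Σ_{k=m₁+1}^{m₂} ‖A_k‖`, while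
`‖Z_{m₁}‖ ≤ ∏ (1 + ‖A_k‖) ≤ e^K`. Multiplying a row vector on the right by `Q = (I | 0)` does not
change its zero padding, so the `ℓ²` distance of the padded rows is controlled by `‖Z_{m₂} - Z_{m₁} Q‖`,
and the Cauchy property follows from the convergence of `Σ ‖A_k‖`.
-/

lemma Real.exp_sub_one_le_mul_exp (x : ℝ) : Real.exp x - 1 ≤ x * Real.exp x := by
  have h₁ : Real.exp (-x) * Real.exp x = 1 := by rw [← Real.exp_add, neg_add_cancel, Real.exp_zero]
  nlinarith [Real.add_one_le_exp (-x), Real.exp_pos x]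

lemma EuclideanSpace.norm_toLp_star {𝕜 ι : Type*} [RCLike 𝕜] [Fintype ι] (v : ι → 𝕜) :
    ‖WithLp.toLp 2 (star v)‖ = ‖WithLp.toLp 2 v‖ := by
  simp [EuclideanSpace.norm_eq]

namespace Matrix

variable {𝕜 : Type*} [RCLike 𝕜] {m n : Type*} [Fintype m] [Fintype n] [DecidableEq m] [DecidableEq n]

lemma l2_opNorm_one_le : ‖(1 : Matrix n n 𝕜)‖ ≤ 1 := by
  have h := l2_opNorm_conjTranspose_mul_self (1 : Matrix n n 𝕜)
  rw [conjTranspose_one, one_mul] at h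
  nlinarith [norm_nonneg (1 : Matrix n n 𝕜)]

lemma l2_opNorm_le_one_of_mul_conjTranspose_eq_one {M : Matrix m n 𝕜}
    (hM : M * Mᴴ = 1) : ‖M‖ ≤ 1 := by
  have h := l2_opNorm_conjTranspose_mul_self Mᴴ
  rw [conjTranspose_conjTranspose, hM, l2_opNorm_conjTranspose] at h
  nlinarith [l2_opNorm_one_le (𝕜 := 𝕜) (n := m), norm_nonneg M]

lemma l2_norm_vecMul_le (v : m → 𝕜) (M : Matrix m n 𝕜) :
    ‖WithLp.toLp 2 (v ᵥ* M)‖ ≤ ‖WithLp.toLp 2 v‖ * ‖M‖ := by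
  have h := l2_opNorm_mulVec Mᴴ (WithLp.toLp 2 (star v))
  rw [l2_opNorm_conjTranspose, mul_comm] at h
  have hvecMul : v ᵥ* M = star (Mᴴ *ᵥ star v) := by
    rw [star_mulVec, star_star, conjTranspose_conjTranspose]
  rw [hvecMul, EuclideanSpace.norm_toLp_star, ← EuclideanSpace.norm_toLp_star v]
  exact h

end Matrix

section Products

variable {p : ℕ → ℕ}

lemma Finset.prod_Ico_add_succ {M : Type*} [CommMonoid M] (f : ℕ → M) (m d : ℕ) :
    ∏ k ∈ Finset.Ico m (m + (d + 1)), f k = (∏ k ∈ Finset.Ico m (m + d), f k) * f (m + d) :=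
  Finset.prod_Ico_succ_top (Nat.le_add_right m d) f

lemma matProd_add (G : ∀ k : ℕ, Matrix (Fin (p k)) (Fin (p (k + 1))) ℂ) (m : ℕ) :
    ∀ d : ℕ, matProd p G (m + d) = matProd p G m * matProdFrom p G m d
  | 0 => (Matrix.mul_one (matProd p G m)).symm
  | d + 1 => by
      change matProd p G (m + d) * G (m + d) = _
      rw [matProd_add G m d, Matrix.mul_assoc]
      rfl

lemma norm_matProd_le_prod (G : ∀ k : ℕ, Matrix (Fin (p k)) (Fin (p (k + 1))) ℂ) :
    ∀ m : ℕ, ‖matProd p G m‖ ≤ ∏ k ∈ Finset.range m, ‖G k‖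
  | 0 => Matrix.l2_opNorm_one_le
  | m + 1 => by
      rw [matProd, Finset.prod_range_succ]
      exact (l2_opNorm_mul _ _).trans
        (mul_le_mul_of_nonneg_right (norm_matProd_le_prod G m) (norm_nonneg _))

lemma norm_matProdFrom_le_prod (G : ∀ k : ℕ, Matrix (Fin (p k)) (Fin (p (k + 1))) ℂ) (m : ℕ) :
    ∀ d : ℕ, ‖matProdFrom p G m d‖ ≤ ∏ k ∈ Finset.Ico m (m + d), ‖G k‖
  | 0 => by simpa [matProdFrom] using Matrix.l2_opNorm_one_le
  | d + 1 => by
      rw [matProdFrom, Finset.prod_Ico_add_succ]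
      exact (l2_opNorm_mul _ _).trans
        (mul_le_mul_of_nonneg_right (norm_matProdFrom_le_prod G m d) (norm_nonneg _))

variable {F A : ∀ k : ℕ, Matrix (Fin (p k)) (Fin (p (k + 1))) ℂ}

lemma norm_add_le_one_add (hF : ∀ k, ‖F k‖ ≤ 1) (k : ℕ) : ‖F k + A k‖ ≤ 1 + ‖A k‖ :=
  (norm_add_le _ _).trans (add_le_add_left (hF k) _)

lemma norm_matProdFrom_sub_le (hF : ∀ k, ‖F k‖ ≤ 1) (m : ℕ) :
    ∀ d : ℕ, ‖matProdFrom p (fun k => F k + A k) m d - matProdFrom p F m d‖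
      ≤ ∏ k ∈ Finset.Ico m (m + d), (1 + ‖A k‖) - 1
  | 0 => by simp [matProdFrom]
  | d + 1 => by
      set P := matProdFrom p (fun k => F k + A k) m d
      set Q := matProdFrom p F m d
      set a := ‖A (m + d)‖
      have hQ : ‖Q‖ ≤ 1 := (norm_matProdFrom_le_prod F m d).trans
        (Finset.prod_le_one (fun _ _ => norm_nonneg _) fun k _ => hF k)
      have hPQ : ‖P - Q‖ ≤ ∏ k ∈ Finset.Ico m (m + d), (1 + ‖A k‖) - 1 :=
        norm_matProdFrom_sub_le hF m d
      have htelescope : P * (F (m + d) + A (m + d)) - Q * F (m + d)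
          = (P - Q) * (F (m + d) + A (m + d)) + Q * A (m + d) := by
        rw [Matrix.sub_mul, Matrix.mul_add, Matrix.mul_add]; abel
      rw [matProdFrom, matProdFrom, htelescope, Finset.prod_Ico_add_succ]
      calc ‖(P - Q) * (F (m + d) + A (m + d)) + Q * A (m + d)‖
          ≤ ‖P - Q‖ * ‖F (m + d) + A (m + d)‖ + ‖Q‖ * a :=
            (norm_add_le _ _).trans (add_le_add (l2_opNorm_mul _ _) (l2_opNorm_mul _ _))
        _ ≤ (∏ k ∈ Finset.Ico m (m + d), (1 + ‖A k‖) - 1) * (1 + a) + 1 * a := by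
            gcongr
            · exact (norm_nonneg _).trans hPQ
            · exact norm_add_le_one_add hF _
        _ = (∏ k ∈ Finset.Ico m (m + d), (1 + ‖A k‖)) * (1 + a) - 1 := by ring

theorem norm_matProd_sub_mul_matProdFrom_le (hF : ∀ k, ‖F k‖ ≤ 1)
    (hA : Summable fun k => ‖A k‖) (m d : ℕ) :
    ‖matProd p (fun k => F k + A k) (m + d)
        - matProd p (fun k => F k + A k) m * matProdFrom p F m d‖
      ≤ Real.exp (2 * ∑' k, ‖A k‖) * ∑ k ∈ Finset.Ico m (m + d), ‖A k‖ := by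
  set K := ∑' k, ‖A k‖
  set S := ∑ k ∈ Finset.Ico m (m + d), ‖A k‖
  have hS : 0 ≤ S := Finset.sum_nonneg fun _ _ => norm_nonneg _
  have hZ : ‖matProd p (fun k => F k + A k) m‖ ≤ Real.exp K := calc
    _ ≤ ∏ k ∈ Finset.range m, (1 + ‖A k‖) := (norm_matProd_le_prod _ m).trans
        (Finset.prod_le_prod (fun _ _ => norm_nonneg _) fun k _ => norm_add_le_one_add hF k)
    _ ≤ Real.exp (∑ k ∈ Finset.range m, ‖A k‖) :=
        Real.prod_one_add_le_exp_sum _ fun _ => norm_nonneg _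
    _ ≤ Real.exp K := Real.exp_le_exp.2 (hA.sum_le_tsum _ fun _ _ => norm_nonneg _)
  have hPQ : ‖matProdFrom p (fun k => F k + A k) m d - matProdFrom p F m d‖
      ≤ S * Real.exp K := calc
    _ ≤ Real.exp S - 1 := (norm_matProdFrom_sub_le hF m d).trans
        (sub_le_sub_right (Real.prod_one_add_le_exp_sum _ fun _ => norm_nonneg _) 1)
    _ ≤ S * Real.exp S := Real.exp_sub_one_le_mul_exp S
    _ ≤ S * Real.exp K := by
        gcongr
        exact hA.sum_le_tsum _ fun _ _ => norm_nonneg _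
  rw [matProd_add, ← Matrix.mul_sub]
  calc _ ≤ Real.exp K * (S * Real.exp K) :=
        (l2_opNorm_mul _ _).trans (mul_le_mul hZ hPQ (norm_nonneg _) (Real.exp_pos K).le)
    _ = Real.exp (2 * K) * S := by rw [two_mul, Real.exp_add]; ring

end Products

lemma Fin.sum_mul_ite_val_eq {R : Type*} [NonAssocSemiring R] {n : ℕ} (f : Fin n → R) (j : ℕ) :
    ∑ t : Fin n, f t * (if (t : ℕ) = j then 1 else 0) = if h : j < n then f ⟨j, h⟩ else 0 := by
  split_ifs with h
  · simp [mul_ite, ← Fin.ext_iff (b := ⟨j, h⟩)]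
  · exact Finset.sum_eq_zero fun t _ => by rw [if_neg (by rintro rfl; exact h t.2), mul_zero]

section Embedding

variable {p : ℕ → ℕ} {k : ℕ}

lemma embMat_mul_conjTranspose (hk : p k ≤ p (k + 1)) : embMat p k * (embMat p k)ᴴ = 1 := by
  ext i i'
  have := Fin.sum_mul_ite_val_eq (fun t : Fin (p (k + 1)) => if (i : ℕ) = t then (1 : ℂ) else 0) i'
  simp_all [mul_apply, embMat, Matrix.one_apply, Fin.ext_iff, eq_comm, i'.2.trans_le hk]

lemma norm_embMat_le (hk : p k ≤ p (k + 1)) : ‖embMat p k‖ ≤ 1 :=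
  l2_opNorm_le_one_of_mul_conjTranspose_eq_one (embMat_mul_conjTranspose hk)

def padVec {n : ℕ} (v : Fin n → ℂ) (j : ℕ) : ℂ :=
  if h : j < n then v ⟨j, h⟩ else 0

lemma padVec_sub {n : ℕ} (v w : Fin n → ℂ) : padVec (v - w) = padVec v - padVec w := by
  ext j
  by_cases h : j < n <;> simp [padVec, h]

lemma tsum_norm_padVec_sq {n : ℕ} (v : Fin n → ℂ) :
    ∑' j, ‖padVec v j‖ ^ 2 = ‖WithLp.toLp 2 v‖ ^ 2 := by
  rw [EuclideanSpace.norm_eq, Real.sq_sqrt (Finset.sum_nonneg fun _ _ => by positivity),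
    tsum_eq_sum (s := Finset.range n) fun j hj => by simp [padVec, Finset.mem_range.not.1 hj],
    ← Fin.sum_univ_eq_sum_range]
  simp [padVec]

lemma padVec_vecMul_embMat (hk : p k ≤ p (k + 1)) (v : Fin (p k) → ℂ) :
    padVec (v ᵥ* embMat p k) = padVec v := by
  ext j
  by_cases hj : j < p (k + 1)
  · simp only [padVec, dif_pos hj, vecMul, dotProduct, embMat, of_apply]
    exact Fin.sum_mul_ite_val_eq v j
  · have hj' : ¬j < p k := fun h => hj (h.trans_le hk)
    simp [padVec, hj, hj']

lemma padVec_vecMul_matProdFrom_embMat (hp : ∀ k, p k ≤ p (k + 1)) (m : ℕ) (v : Fin (p m) → ℂ) :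
    ∀ d : ℕ, padVec (v ᵥ* matProdFrom p (embMat p) m d) = padVec v
  | 0 => by rw [matProdFrom, vecMul_one]
  | d + 1 => by
      rw [matProdFrom, ← vecMul_vecMul, padVec_vecMul_embMat (hp _),
        padVec_vecMul_matProdFrom_embMat hp m v d]

lemma padRow_eq (G : ∀ k : ℕ, Matrix (Fin (p k)) (Fin (p (k + 1))) ℂ) (m : ℕ) :
    padRow p G m = padVec (1 ᵥ* matProd p G m) := by
  ext j
  simp [padRow, padVec, vecMul, dotProduct]

lemma padRow_add_sub_padRow (hp : ∀ k, p k ≤ p (k + 1))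
    (A : ∀ k : ℕ, Matrix (Fin (p k)) (Fin (p (k + 1))) ℂ) (m d : ℕ) :
    padRow p (fun k => embMat p k + A k) (m + d) - padRow p (fun k => embMat p k + A k) m
      = padVec (1 ᵥ* (matProd p (fun k => embMat p k + A k) (m + d)
          - matProd p (fun k => embMat p k + A k) m * matProdFrom p (embMat p) m d)) := by
  rw [vecMul_sub, padVec_sub, ← vecMul_vecMul, padVec_vecMul_matProdFrom_embMat hp,
    padRow_eq, padRow_eq]

theorem sqrt_tsum_norm_padRow_sub_sq_le (hp : ∀ k, p k ≤ p (k + 1))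
    (A : ∀ k : ℕ, Matrix (Fin (p k)) (Fin (p (k + 1))) ℂ) (hA : Summable fun k => ‖A k‖)
    (m₁ m₂ : ℕ) :
    Real.sqrt (∑' j, ‖padRow p (fun k => embMat p k + A k) m₂ j
        - padRow p (fun k => embMat p k + A k) m₁ j‖ ^ 2)
      ≤ ‖WithLp.toLp 2 (1 : Fin (p 0) → ℂ)‖ * Real.exp (2 * ∑' k, ‖A k‖)
        * dist (∑ k ∈ Finset.range m₁, ‖A k‖) (∑ k ∈ Finset.range m₂, ‖A k‖) := by
  wlog h : m₁ ≤ m₂ generalizing m₁ m₂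
  · simpa only [norm_sub_rev, dist_comm] using this m₂ m₁ (le_of_not_ge h)
  obtain ⟨d, rfl⟩ := Nat.exists_eq_add_of_le h
  have hdist : dist (∑ k ∈ Finset.range m₁, ‖A k‖) (∑ k ∈ Finset.range (m₁ + d), ‖A k‖)
      = ∑ k ∈ Finset.Ico m₁ (m₁ + d), ‖A k‖ := by
    rw [dist_comm, Real.dist_eq, ← Finset.sum_Ico_eq_sub _ h,
      abs_of_nonneg (Finset.sum_nonneg fun _ _ => norm_nonneg _)]
  simp only [← Pi.sub_apply, padRow_add_sub_padRow hp, tsum_norm_padVec_sq, hdist,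
    Real.sqrt_sq (norm_nonneg _), mul_assoc]
  exact (l2_norm_vecMul_le _ _).trans <| mul_le_mul_of_nonneg_left
    (norm_matProd_sub_mul_matProdFrom_le (fun k => norm_embMat_le (hp k)) hA m₁ d) (norm_nonneg _)

end Embedding

theorem partial_products_cauchy_general (p : ℕ → ℕ)
    (hp : ∀ k, p k ≤ p (k + 1))
    (A : ∀ k : ℕ, Matrix (Fin (p k)) (Fin (p (k + 1))) ℂ)
    (hK : Summable (fun k => ‖A k‖)) :
    (∀ m₁ d : ℕ, 0 < d →
      ‖matProd p (fun k => embMat p k + A k) (m₁ + d)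
          - matProd p (fun k => embMat p k + A k) m₁ * matProdFrom p (embMat p) m₁ d‖
        ≤ Real.exp (2 * ∑' k : ℕ, ‖A k‖) * ∑ k ∈ Finset.Ico m₁ (m₁ + d), ‖A k‖) ∧
    ∀ ε > (0 : ℝ), ∃ M : ℕ, ∀ m₁ m₂ : ℕ, M ≤ m₁ → M ≤ m₂ →
      Real.sqrt (∑' j : ℕ,
          ‖padRow p (fun k => embMat p k + A k) m₂ j
            - padRow p (fun k => embMat p k + A k) m₁ j‖ ^ 2) < ε := by
  refine ⟨fun m₁ d _ =>
    norm_matProd_sub_mul_matProdFrom_le (fun k => norm_embMat_le (hp k)) hK m₁ d, fun ε hε => ?_⟩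
  have hdist := cauchySeq_iff_tendsto_dist_atTop_0.1 hK.hasSum.tendsto_sum_nat.cauchySeq
  have hlim : Filter.Tendsto (fun mn : ℕ × ℕ => Real.sqrt (∑' j : ℕ,
      ‖padRow p (fun k => embMat p k + A k) mn.2 j
        - padRow p (fun k => embMat p k + A k) mn.1 j‖ ^ 2)) Filter.atTop (nhds 0) :=
    squeeze_zero (fun _ => Real.sqrt_nonneg _)
      (fun mn => sqrt_tsum_norm_padRow_sub_sq_le hp A hK mn.1 mn.2)
      (by simpa only [mul_zero] using hdist.const_mul _)
  obtain ⟨M, hM⟩ := Filter.eventually_atTop_prod_self'.1 (hlim.eventually (gt_mem_nhds hε))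
  exact ⟨M, fun m₁ m₂ h₁ h₂ => hM m₁ h₁ m₂ h₂⟩

/-- Cauchy property of the partial Blaschke products: for `m₂ = m₁ + d > m₁`,
`‖Z_{m₂} - Z_{m₁} F_{m₁+1}⋯F_{m₂}‖ ≤ e^{2K} Σ_{k=m₁+1}^{m₂} ‖A_k‖` with
`K = Σ ‖A_k‖`, and the zero-padded embeddings of the `Z_m` into `ℓ²` form a Cauchy
sequence. -/
theorem partial_products_cauchy (p : ℕ → ℕ)
    (hp : ∀ k, p k ≤ p (k + 1)) (hp0 : p 0 = 1)
    (A : ∀ k : ℕ, Matrix (Fin (p k)) (Fin (p (k + 1))) ℂ)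
    (hK : Summable (fun k => ‖A k‖)) :
    (∀ m₁ d : ℕ, 0 < d →
      ‖matProd p (fun k => embMat p k + A k) (m₁ + d)
          - matProd p (fun k => embMat p k + A k) m₁ * matProdFrom p (embMat p) m₁ d‖
        ≤ Real.exp (2 * ∑' k : ℕ, ‖A k‖) * ∑ k ∈ Finset.Ico m₁ (m₁ + d), ‖A k‖) ∧
    ∀ ε > (0 : ℝ), ∃ M : ℕ, ∀ m₁ m₂ : ℕ, M ≤ m₁ → M ≤ m₂ →
      Real.sqrt (∑' j : ℕ,
          ‖padRow p (fun k => embMat p k + A k) m₂ j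
            - padRow p (fun k => embMat p k + A k) m₁ j‖ ^ 2) < ε :=
  partial_products_cauchy_general p hp A hK
end
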